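/- Let G act smoothly on a manifold P preserving a closed 2-form ω. For each x ∈ P, define K(x) to be the pullback of ω under the orbit map g ↦ g·x from G to P, evaluated as a left-invariant 2-form on G, i.e. an element of Λ²𝔤*. Then K(x) is a Lie algebra 2-cocycle: for all u, v, w ∈ 𝔤, K(x)([u,v], w) + K(x)([v,w], u) + K(x)([w,u], v) = 0. -/
import Mathlib


/-- Let a Lie group `G` act smoothly on `P` preserving a closed
2-form `ω`.  For `x ∈ P` let `K(x) ∈ Λ²𝔤*` be the pullback of `ω` under the
orbit map `g ↦ g·x`, i.e. `K(x)(u,v) = ω_x(u_P(x), v_P(x))`.  Then `K(x)` is a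
Lie algebra 2-cocycle: `K(x)([u,v],w) + K(x)([v,w],u) + K(x)([w,u],v) = 0`.

Modeled on a chart `P` (a real normed space); the action enters through its
infinitesimal generators `vP`, which form a morphism of Lie algebras into
vector fields, and invariance of `ω` is the vanishing of the Lie derivative
`L_{u_P} ω = 0`. -/
theorem stmt8
    (P : Type*) [NormedAddCommGroup P] [NormedSpace ℝ P]
    (𝔤 : Type*) [LieRing 𝔤] [LieAlgebra ℝ 𝔤]
    -- the 2-form `ω`, pointwise
    (ω : P → P → P → ℝ)
    (ω_bilin : ∀ p : P, ∃ B : P →ₗ[ℝ] P →ₗ[ℝ] ℝ, ∀ u v, ω p u v = B u v)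
    (ω_antisymm : ∀ p u v, ω p u v = - ω p v u)
    (ω_smooth : ∀ u v : P, ContDiff ℝ (⊤ : ℕ∞) (fun q => ω q u v))
    -- `ω` is closed
    (ω_closed : ∀ p u v w : P,
      fderiv ℝ (fun q => ω q v w) p u
        - fderiv ℝ (fun q => ω q u w) p v
        + fderiv ℝ (fun q => ω q u v) p w = 0)
    -- the infinitesimal generators of the `G`-action
    (vP : 𝔤 → P → P)
    (vP_smooth : ∀ v : 𝔤, ContDiff ℝ (⊤ : ℕ∞) (vP v))
    (vP_action : ∀ (u v : 𝔤) (p : P),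
      vP ⁅u, v⁆ p = fderiv ℝ (vP v) p (vP u p) - fderiv ℝ (vP u) p (vP v p))
    -- `ω` is invariant: the Lie derivative `L_{u_P} ω` vanishes
    (ω_invariant : ∀ (u : 𝔤) (p a b : P),
      fderiv ℝ (fun q => ω q a b) p (vP u p)
        + ω p (fderiv ℝ (vP u) p a) b + ω p a (fderiv ℝ (vP u) p b) = 0) :
    ∀ (x : P) (u v w : 𝔤),
      ω x (vP ⁅u, v⁆ x) (vP w x)
        + ω x (vP ⁅v, w⁆ x) (vP u x)
        + ω x (vP ⁅w, u⁆ x) (vP v x) = 0 := by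

  intro x u v w
  obtain ⟨B, hB⟩ := ω_bilin x
  set U := vP u x with hU
  set V := vP v x with hV
  set W := vP w x with hW
  have h1 := ω_invariant u x V W
  have h2 := ω_invariant v x W U
  have h3 := ω_invariant w x U V
  have hc := ω_closed x U V W
  -- rewrite antisymmetric derivative terms
  have e1 : (fun q => ω q W U) = fun q => -(ω q U W) := funext fun q => ω_antisymm q W U
  have e2 : fderiv ℝ (fun q => ω q W U) x = -(fderiv ℝ (fun q => ω q U W) x) := by
    rw [e1]; exact fderiv_neg
  rw [vP_action u v x, vP_action v w x, vP_action w u x, ← hU, ← hV, ← hW]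
  have hBsub : ∀ a b c : P, ω x (a - b) c = ω x a c - ω x b c := by
    intro a b c; rw [hB, hB, hB, map_sub, LinearMap.sub_apply]
  rw [hBsub, hBsub, hBsub]
  have a1 : ω x V (fderiv ℝ (vP u) x W) = - ω x (fderiv ℝ (vP u) x W) V := ω_antisymm x _ _
  have a2 : ω x W (fderiv ℝ (vP v) x U) = - ω x (fderiv ℝ (vP v) x U) W := ω_antisymm x _ _
  have a3 : ω x U (fderiv ℝ (vP w) x V) = - ω x (fderiv ℝ (vP w) x V) U := ω_antisymm x _ _
  rw [a1] at h1
  rw [a2] at h2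
  rw [a3] at h3
  rw [e2] at h2
  simp only [ContinuousLinearMap.neg_apply] at h2
  linarith
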